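/- arXiv:1508.00517 — 4 statements merged into one kernel-verified Lean document; each statement's English description precedes it below -/
import Mathlib

section
/- For all a, b, c ∈ M, [[a,b],c] = [a^{(b,c)}, [b,c]], a generalized associativity law for the induced binary operation on a right transversal. -/
/-- [[a,b],c] = [a^{(b,c)}, [b,c]]. -/
theorem transversal_A4
    {G : Type*} [Group G] (H : Subgroup G) (M : Set G)
    (hT : ∀ x : G, ∃! p : H × M, (p.1 : G) * (p.2 : G) = x)
    (Φ : M → H → M) (Ψ : M → H → H) (Ξ : M → M → M) (Λ : M → M → H)
    (hF1 : ∀ (a : M) (α : H), (a : G) * α = (Ψ a α : G) * (Φ a α : G))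
    (hF2 : ∀ (a b : M), (a : G) * (b : G) = (Λ a b : G) * (Ξ a b : G)) :
    ∀ (a b c : M), Ξ (Ξ a b) c = Ξ (Φ a (Λ b c)) (Ξ b c) := by
  intro a b c
  have h1 : ((Λ a b * Λ (Ξ a b) c : H) : G) * (Ξ (Ξ a b) c : G)
      = (a : G) * b * c := by
    push_cast
    rw [mul_assoc, ← hF2 (Ξ a b) c, ← mul_assoc, ← hF2]
  have h2 : ((Ψ a (Λ b c) * Λ (Φ a (Λ b c)) (Ξ b c) : H) : G)
      * (Ξ (Φ a (Λ b c)) (Ξ b c) : G) = (a : G) * b * c := by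
    push_cast
    rw [mul_assoc, ← hF2, ← mul_assoc, ← hF1, mul_assoc, ← hF2, mul_assoc]
  have := (hT ((a : G) * b * c)).unique
    (y₁ := (Λ a b * Λ (Ξ a b) c, Ξ (Ξ a b) c))
    (y₂ := (Ψ a (Λ b c) * Λ (Φ a (Λ b c)) (Ξ b c), Ξ (Φ a (Λ b c)) (Ξ b c))) h1 h2
  exact congrArg Prod.snd this
end

section
/- For elements x, a, b ∈ M, the equation [x, a] = b holds if and only if x = [b^{a^(-1)}, a^[-1]] and (x,a)·(ᵇ(a^(-1)))·(b^{a^(-1)}, a^[-1]) = ε. -/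
/-- [x, a] = b iff x = [b^{a^(-1)}, a^[-1]] and
(x,a)·(ᵇ(a^(-1)))·(b^{a^(-1)}, a^[-1]) = ε. -/
theorem transversal_equation_lemma
    {G : Type*} [Group G] (H : Subgroup G) (M : Set G)
    (hT : ∀ x : G, ∃! p : H × M, (p.1 : G) * (p.2 : G) = x)
    (Φ : M → H → M) (Ψ : M → H → H) (Ξ : M → M → M) (Λ : M → M → H)
    (hF1 : ∀ (a : M) (α : H), (a : G) * α = (Ψ a α : G) * (Φ a α : G))
    (hF2 : ∀ (a b : M), (a : G) * (b : G) = (Λ a b : G) * (Ξ a b : G))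
    (ι : M → H) (μ : M → M)
    (hinv : ∀ a : M, (a : G)⁻¹ = (ι a : G) * (μ a : G)) :
    ∀ x a b : M, Ξ x a = b ↔
      (x = Ξ (Φ b (ι a)) (μ a) ∧
       Λ x a * Ψ b (ι a) * Λ (Φ b (ι a)) (μ a) = 1) := by
  have uniq : ∀ (h h' : H) (m m' : M), (h : G) * m = (h' : G) * m' →
      h = h' ∧ m = m' := by
    intro h h' m m' e
    have := (hT ((h' : G) * m')).unique (y₁ := (h, m)) (y₂ := (h', m')) e rfl
    exact ⟨congrArg Prod.fst this, congrArg Prod.snd this⟩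
  intro x a b
  have hι : (ι a : G) = (a : G)⁻¹ * (μ a : G)⁻¹ := by
    have := hinv a
    rw [this]; group
  have hΨ : (Ψ b (ι a) : G) = (b : G) * (ι a : G) * (Φ b (ι a) : G)⁻¹ :=
    eq_mul_inv_of_mul_eq (hF1 b (ι a)).symm
  have hΛ' : (Λ (Φ b (ι a)) (μ a) : G)
      = (Φ b (ι a) : G) * (μ a : G) * (Ξ (Φ b (ι a)) (μ a) : G)⁻¹ :=
    eq_mul_inv_of_mul_eq (hF2 (Φ b (ι a)) (μ a)).symm
  constructor
  · intro hb
    have hΛ : (Λ x a : G) = (x : G) * (a : G) * (b : G)⁻¹ := by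
      have := hF2 x a
      rw [hb] at this
      exact eq_mul_inv_of_mul_eq this.symm
    have key : ((Λ x a * Ψ b (ι a) * Λ (Φ b (ι a)) (μ a) : H) : G)
        * (Ξ (Φ b (ι a)) (μ a) : G) = ((1 : H) : G) * (x : G) := by
      push_cast
      rw [hΛ, hΨ, hΛ', hι]
      group
    obtain ⟨h1, h2⟩ := uniq _ _ _ _ key
    exact ⟨h2.symm, h1⟩
  · rintro ⟨hx, hh⟩
    have hhG : (Λ x a : G) * (Ψ b (ι a) : G) * (Λ (Φ b (ι a)) (μ a) : G) = 1 := by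
      have := congrArg (Subtype.val) hh
      push_cast at this
      exact this
    have hΛinv : (Λ x a : G)⁻¹
        = (Ψ b (ι a) : G) * (Λ (Φ b (ι a)) (μ a) : G) := by
      rw [mul_assoc] at hhG
      exact inv_eq_of_mul_eq_one_right hhG
    have hxG : (x : G) = (Λ (Φ b (ι a)) (μ a) : G)⁻¹ * (Φ b (ι a) : G) * (μ a : G) := by
      rw [hx, eq_comm, mul_assoc, inv_mul_eq_iff_eq_mul]
      exact hF2 (Φ b (ι a)) (μ a)
    have hΞ : (Ξ x a : G) = (Λ x a : G)⁻¹ * (x : G) * (a : G) := by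
      rw [eq_comm, mul_assoc, inv_mul_eq_iff_eq_mul]
      exact hF2 x a
    apply Subtype.ext
    rw [hΞ, hΛinv, hxG, hΨ, hι]
    group
end

section
/- For every a, b ∈ M, the equation [x, a] = b has a unique solution x ∈ M, namely x = [b^{a^(-1)}, a^[-1]]; hence (M, [·,·]) is a right quasigroup with left neutral element o. -/
/-- the equation [x, a] = b has the unique solution
x = [b^{a^(-1)}, a^[-1]]; hence (M, Ξ) is a right quasigroup with left
neutral element o. -/
theorem transversal_right_quasigroup
    {G : Type*} [Group G] (H : Subgroup G) (M : Set G)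
    (hT : ∀ x : G, ∃! p : H × M, (p.1 : G) * (p.2 : G) = x)
    (Φ : M → H → M) (Ψ : M → H → H) (Ξ : M → M → M) (Λ : M → M → H)
    (hF1 : ∀ (a : M) (α : H), (a : G) * α = (Ψ a α : G) * (Φ a α : G))
    (hF2 : ∀ (a b : M), (a : G) * (b : G) = (Λ a b : G) * (Ξ a b : G))
    (θ : H) (o : M) (he : (θ : G) * (o : G) = 1)
    (ι : M → H) (μ : M → M)
    (hinv : ∀ a : M, (a : G)⁻¹ = (ι a : G) * (μ a : G)) :
    (∀ a b : M, ∃! x : M, Ξ x a = b) ∧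
    (∀ a b : M, Ξ (Ξ (Φ b (ι a)) (μ a)) a = b) ∧
    (∀ a : M, Ξ o a = a) := by
  -- key: if h * b = x * a then Ξ x a = b
  have key : ∀ (x a b : M) (h : H), (h : G) * b = (x : G) * a → Ξ x a = b := by
    intro x a b h hEq
    obtain ⟨p, _, hu⟩ := hT ((x : G) * a)
    have h1 : ((h, b) : H × M) = p := hu (h, b) hEq
    have h2 : ((Λ x a, Ξ x a) : H × M) = p := hu (Λ x a, Ξ x a) (hF2 x a).symm
    exact (congrArg Prod.snd (h1.trans h2.symm)).symm
  -- the formula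
  have formula : ∀ a b : M, Ξ (Ξ (Φ b (ι a)) (μ a)) a = b := by
    intro a b
    set c := Φ b (ι a) with hc
    set d := Ξ c (μ a) with hd
    refine key d a b ((Ψ b (ι a) * Λ c (μ a))⁻¹) ?_
    have h1 : (b : G) * (ι a : G) = (Ψ b (ι a) : G) * c := hF1 b (ι a)
    have h2 : (c : G) * (μ a : G) = (Λ c (μ a) : G) * d := hF2 c (μ a)
    have h3 : (a : G)⁻¹ = (ι a : G) * (μ a : G) := hinv a
    have : ((Ψ b (ι a) * Λ c (μ a) : H) : G) * ((d : G) * a) = (b : G) := by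
      push_cast
      calc (Ψ b (ι a) : G) * (Λ c (μ a) : G) * ((d : G) * a)
          = (Ψ b (ι a) : G) * ((Λ c (μ a) : G) * d) * a := by group
        _ = (Ψ b (ι a) : G) * ((c : G) * μ a) * a := by rw [← h2]
        _ = ((Ψ b (ι a) : G) * c) * ((μ a : G) * a) := by group
        _ = ((b : G) * ι a) * ((μ a : G) * a) := by rw [← h1]
        _ = (b : G) * ((a : G)⁻¹ * a) := by rw [h3]; group
        _ = b := by group
    calc ((((Ψ b (ι a) * Λ c (μ a))⁻¹ : H)) : G) * b
        = ((Ψ b (ι a) * Λ c (μ a) : H) : G)⁻¹ * b := by push_cast; ring_nf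
      _ = (d : G) * a := by rw [← this]; group
  -- uniqueness: any solution equals the formula's value
  have uniq : ∀ a b x : M, Ξ x a = b → x = Ξ (Φ b (ι a)) (μ a) := by
    intro a b x hx
    set c := Φ b (ι a) with hc
    set d := Ξ c (μ a) with hd
    show x = d
    -- show x = d using uniqueness of decomposition of x
    obtain ⟨p, _, hu⟩ := hT (x : G)
    have e1 : ((1, x) : H × M) = p := hu (1, x) (by simp)
    have e2 : ((Λ x a * Ψ b (ι a) * Λ c (μ a), d) : H × M) = p := by
      refine hu _ ?_
      have h0 : (x : G) * a = (Λ x a : G) * b := by rw [hF2 x a, hx]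
      have h1 : (b : G) * (ι a : G) = (Ψ b (ι a) : G) * c := hF1 b (ι a)
      have h2 : (c : G) * (μ a : G) = (Λ c (μ a) : G) * d := hF2 c (μ a)
      have h3 : (a : G)⁻¹ = (ι a : G) * (μ a : G) := hinv a
      show ((Λ x a * Ψ b (ι a) * Λ c (μ a) : H) : G) * d = (x : G)
      push_cast
      calc (Λ x a : G) * Ψ b (ι a) * Λ c (μ a) * d
          = (Λ x a : G) * Ψ b (ι a) * ((Λ c (μ a) : G) * d) := by group
        _ = (Λ x a : G) * Ψ b (ι a) * ((c : G) * μ a) := by rw [← h2]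
        _ = (Λ x a : G) * ((Ψ b (ι a) : G) * c) * μ a := by group
        _ = (Λ x a : G) * ((b : G) * ι a) * μ a := by rw [← h1]
        _ = ((Λ x a : G) * b) * ((ι a : G) * μ a) := by group
        _ = ((x : G) * a) * (a : G)⁻¹ := by rw [← h0, ← h3]
        _ = x := by group
    have := e1.trans e2.symm
    exact congrArg Prod.snd this
  refine ⟨fun a b => ⟨Ξ (Φ b (ι a)) (μ a), formula a b, fun x hx => uniq a b x hx⟩,
    formula, fun a => ?_⟩
  refine key o a a θ⁻¹ ?_
  have ho : (o : G) = (θ : G)⁻¹ := eq_inv_of_mul_eq_one_right he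
  push_cast
  rw [ho]
end

section
/- If H is a subgroup of index 2 in G and M is any right transversal to H, then the induced binary operation [·,·] makes M a group. -/
/-! A subgroup of index two is normal, so the right transversal `M` is also a left transversal and
`M ≃ G ⧸ H`; since `a * b ∈ H * Ξ a b`, this bijection carries `Ξ` to the multiplication of
`G ⧸ H`, and the group structure of the quotient transports to `M`. -/

theorem Subgroup.isComplement_comm_of_normal {G : Type*} [Group G] {H : Subgroup G}
    [hN : H.Normal] {T : Set G} : IsComplement (H : Set G) T ↔ IsComplement T (H : Set G) := by
  rw [isComplement_iff_existsUnique_mul_inv_mem, isComplement_iff_existsUnique_inv_mul_mem]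
  simp only [SetLike.mem_coe, hN.mem_comm_iff]

theorem Equiv.exists_group_mul_eq {α β : Type*} [Group β] (e : α ≃ β) (op : α → α → α)
    (he : ∀ a b, e (op a b) = e a * e b) : ∃ grp : Group α, grp.mul = op :=
  ⟨e.group, funext₂ fun a b => e.symm_apply_eq.mpr (he a b).symm⟩

theorem QuotientGroup.mk_mul_of_mul_eq {G : Type*} [Group G] {N : Subgroup G} [N.Normal]
    {a b c n : G} (hn : n ∈ N) (h : a * b = n * c) : (c : G ⧸ N) = a * b := by
  rw [← QuotientGroup.mk_mul, h, QuotientGroup.mk_mul, (QuotientGroup.eq_one_iff n).mpr hn,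
    one_mul]

/-- if H has index 2, the induced operation Ξ makes any right
transversal M a group. -/
theorem index_two_transversal_group
    {G : Type*} [Group G] (H : Subgroup G) (hI : H.index = 2) (M : Set G)
    (hT : ∀ x : G, ∃! p : H × M, (p.1 : G) * (p.2 : G) = x)
    (Ξ : M → M → M) (Λ : M → M → H)
    (hF2 : ∀ (a b : M), (a : G) * (b : G) = (Λ a b : G) * (Ξ a b : G)) :
    ∃ grp : Group M, grp.mul = Ξ := by
  have : H.Normal := Subgroup.normal_of_index_eq_two hI
  have hM : Subgroup.IsComplement M (H : Set G) :=
    Subgroup.isComplement_comm_of_normal.mp (Subgroup.isComplement_iff_existsUnique.mpr hT)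
  let e : M ≃ G ⧸ H := .ofBijective _ (Subgroup.isComplement_subgroup_right_iff_bijective.mp hM)
  exact e.exists_group_mul_eq Ξ fun a b => QuotientGroup.mk_mul_of_mul_eq (Λ a b).2 (hF2 a b)
end
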